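/- arXiv:2411.04212 — 5 statements merged into one kernel-verified Lean document; each statement's English description precedes it below -/
import Mathlib

section
/- Let H be a real Hilbert space and I the identity map on H. Then for every n ≥ 1 and all x, y ∈ H, the n-th Fitzpatrick function of I satisfies φ⁽ⁿ⁾_I(x,y) = (n/(2(n+1)))‖x-y‖² + ⟨x,y⟩. -/
/-!
Polarization gives `⟪a - b, b⟫ = (‖a‖² - ‖b‖² - ‖a - b‖²) / 2`, so for the chain
`x = p 0, p 1, …, p n, p (n + 1) = y` the sum defining `φ⁽ⁿ⁾_I(x,y)` telescopes to
`(‖x‖² + ‖y‖² - E) / 2`, where `E = ∑ ‖p i - p (i + 1)‖²` is the energy of the chain.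
By the triangle and Cauchy–Schwarz inequalities `E ≥ ‖x - y‖² / (n + 1)`, with equality for
equally spaced points on the segment `[x, y]`.
-/

open scoped RealInnerProductSpace
open Finset

lemma add_sum_Icc_two_eq_sum_range {M : Type*} [AddCommMonoid M] (f : ℕ → M) {n : ℕ}
    (hn : 1 ≤ n) : f 1 + ∑ i ∈ Icc 2 n, f i = ∑ i ∈ range n, f (i + 1) := by
  obtain ⟨m, rfl⟩ := Nat.exists_eq_add_of_le' hn
  rw [← Ico_add_one_right_eq_Icc, sum_Ico_eq_sum_range, sum_range_succ', add_comm,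
    show m + 1 + 1 - 2 = m by omega]
  simp only [add_comm 2, add_assoc, zero_add]

section ChainEnergy

variable {E : Type*} [SeminormedAddCommGroup E]

def chainEnergy (p : ℕ → E) (m : ℕ) : ℝ :=
  ∑ i ∈ range m, ‖p i - p (i + 1)‖ ^ 2

lemma norm_sub_sq_le_mul_chainEnergy (p : ℕ → E) (m : ℕ) :
    ‖p 0 - p m‖ ^ 2 ≤ m * chainEnergy p m := by
  calc ‖p 0 - p m‖ ^ 2 = ‖∑ i ∈ range m, (p i - p (i + 1))‖ ^ 2 := by rw [sum_range_sub']
    _ ≤ (∑ i ∈ range m, ‖p i - p (i + 1)‖) ^ 2 := by gcongr; exact norm_sum_le _ _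
    _ ≤ m * chainEnergy p m := by
      simpa [chainEnergy] using
        sq_sum_le_card_mul_sum_sq (s := range m) (f := fun i => ‖p i - p (i + 1)‖)

lemma chainEnergy_lineMap [NormedSpace ℝ E] (x y : E) {m : ℕ} (hm : m ≠ 0) :
    chainEnergy (fun i => AffineMap.lineMap x y ((i : ℝ) / m)) m = ‖x - y‖ ^ 2 / m := by
  have hm' : (m : ℝ) ≠ 0 := Nat.cast_ne_zero.mpr hm
  have hstep (i : ℕ) :
      (|(i : ℝ) / m - ((i + 1 : ℕ) : ℝ) / m| * ‖x - y‖) ^ 2 = ‖x - y‖ ^ 2 / m ^ 2 := by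
    rw [mul_pow, sq_abs]
    push_cast
    field_simp
    ring
  simp_rw [chainEnergy, ← dist_eq_norm, dist_lineMap_lineMap, Real.dist_eq, dist_eq_norm, hstep]
  rw [sum_const, card_range, nsmul_eq_mul]
  field_simp

end ChainEnergy

section InnerProductSpace

variable {H : Type*} [SeminormedAddCommGroup H] [InnerProductSpace ℝ H]

lemma real_inner_sub_self (a b : H) :
    ⟪a - b, b⟫ = (‖a‖ ^ 2 - ‖b‖ ^ 2 - ‖a - b‖ ^ 2) / 2 := by
  rw [norm_sub_sq_real, inner_sub_left, real_inner_self_eq_norm_sq]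
  ring

lemma sum_range_real_inner_sub_succ (p : ℕ → H) (m : ℕ) :
    ∑ i ∈ range m, ⟪p i - p (i + 1), p (i + 1)⟫
      = (‖p 0‖ ^ 2 - ‖p m‖ ^ 2 - chainEnergy p m) / 2 := by
  simp_rw [real_inner_sub_self]
  rw [← sum_div, sum_sub_distrib, sum_range_sub' (fun i => ‖p i‖ ^ 2), chainEnergy]

lemma fitzpatrick_sum_eq_sub_chainEnergy (p : ℕ → H) {n : ℕ} (hn : 1 ≤ n) :
    ⟪p 0 - p 1, p 1⟫ + (∑ i ∈ Icc 2 n, ⟪p (i - 1) - p i, p i⟫) + ⟪p n, p (n + 1)⟫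
      = (‖p 0‖ ^ 2 + ‖p (n + 1)‖ ^ 2 - chainEnergy p (n + 1)) / 2 := by
  have hchain := add_sum_Icc_two_eq_sum_range (fun i => ⟪p (i - 1) - p i, p i⟫) hn
  simp only [Nat.sub_self, Nat.add_sub_cancel] at hchain
  rw [hchain, sum_range_real_inner_sub_succ, chainEnergy, chainEnergy, sum_range_succ,
    norm_sub_sq_real (p n)]
  ring

lemma fitzpatrick_sum_le (x y : H) (c : ℕ → H) {n : ℕ} (hn : 1 ≤ n) :
    ⟪x - c 1, c 1⟫ + (∑ i ∈ Icc 2 n, ⟪c (i - 1) - c i, c i⟫) + ⟪c n, y⟫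
      ≤ (‖x‖ ^ 2 + ‖y‖ ^ 2 - ‖x - y‖ ^ 2 / (n + 1 : ℕ)) / 2 := by
  set p := Function.update (Function.update c 0 x) (n + 1) y
  have hp₀ : p 0 = x := by simp [p]
  have hp₁ : p (n + 1) = y := by simp [p]
  have hpc : ∀ i, 1 ≤ i → i ≤ n → p i = c i := fun i hi₁ hi₂ => by
    simp only [p, Function.update_of_ne (show i ≠ n + 1 by omega),
      Function.update_of_ne (show i ≠ 0 by omega)]
  have hsum : ∑ i ∈ Icc 2 n, ⟪p (i - 1) - p i, p i⟫ = ∑ i ∈ Icc 2 n, ⟪c (i - 1) - c i, c i⟫ :=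
    sum_congr rfl fun i hi => by
      rw [mem_Icc] at hi
      rw [hpc i (by omega) hi.2, hpc (i - 1) (by omega) (by omega)]
  have h := fitzpatrick_sum_eq_sub_chainEnergy p hn
  rw [hsum, hp₀, hp₁, hpc 1 le_rfl hn, hpc n hn le_rfl] at h
  have henergy := norm_sub_sq_le_mul_chainEnergy p (n + 1)
  rw [hp₀, hp₁] at henergy
  rw [h]
  gcongr
  rwa [div_le_iff₀ (by positivity), mul_comm]

lemma fitzpatrick_sum_lineMap (x y : H) {n : ℕ} (hn : 1 ≤ n) :
    let q : ℕ → H := fun i => AffineMap.lineMap x y ((i : ℝ) / (n + 1 : ℕ))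
    ⟪x - q 1, q 1⟫ + (∑ i ∈ Icc 2 n, ⟪q (i - 1) - q i, q i⟫) + ⟪q n, y⟫
      = (‖x‖ ^ 2 + ‖y‖ ^ 2 - ‖x - y‖ ^ 2 / (n + 1 : ℕ)) / 2 := by
  intro q
  have hq₀ : q 0 = x := by simp [q]
  have hq₁ : q (n + 1) = y := by simp [q, Nat.cast_add_one_ne_zero]
  rw [← hq₀, ← hq₁, fitzpatrick_sum_eq_sub_chainEnergy q hn,
    chainEnergy_lineMap x y n.succ_ne_zero, hq₀, hq₁]

end InnerProductSpace

theorem fitzpatrick_n_identity_general {H : Type*} [NormedAddCommGroup H]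
    [InnerProductSpace ℝ H] (n : ℕ) (hn : 1 ≤ n) (x y : H) :
    IsLUB {r : ℝ | ∃ c : ℕ → H,
        r = ⟪x - c 1, c 1⟫ + (∑ i ∈ Finset.Icc 2 n, ⟪c (i - 1) - c i, c i⟫) + ⟪c n, y⟫}
      ((n : ℝ) / (2 * ((n : ℝ) + 1)) * ‖x - y‖ ^ 2 + ⟪x, y⟫) := by
  have hvalue : (n : ℝ) / (2 * ((n : ℝ) + 1)) * ‖x - y‖ ^ 2 + ⟪x, y⟫
      = (‖x‖ ^ 2 + ‖y‖ ^ 2 - ‖x - y‖ ^ 2 / (n + 1 : ℕ)) / 2 := by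
    rw [norm_sub_sq_real x y]
    push_cast
    field_simp
    ring
  rw [hvalue]
  refine IsGreatest.isLUB ⟨⟨fun i => AffineMap.lineMap x y ((i : ℝ) / (n + 1 : ℕ)), ?_⟩, ?_⟩
  · exact (fitzpatrick_sum_lineMap x y hn).symm
  · rintro _ ⟨c, rfl⟩
    exact fitzpatrick_sum_le x y c hn

/-- The `n`-th Fitzpatrick function of the identity on a real Hilbert space:
`φ⁽ⁿ⁾_I(x,y) = (n/(2(n+1)))‖x-y‖² + ⟨x,y⟩`. -/
theorem fitzpatrick_n_identity {H : Type*} [NormedAddCommGroup H]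
    [InnerProductSpace ℝ H] [CompleteSpace H] (n : ℕ) (hn : 1 ≤ n) (x y : H) :
    IsLUB {r : ℝ | ∃ c : ℕ → H,
        r = ⟪x - c 1, c 1⟫ + (∑ i ∈ Finset.Icc 2 n, ⟪c (i - 1) - c i, c i⟫) + ⟪c n, y⟫}
      ((n : ℝ) / (2 * ((n : ℝ) + 1)) * ‖x - y‖ ^ 2 + ⟪x, y⟫) :=
  fitzpatrick_n_identity_general n hn x y
end

section
/- Let H be a real Hilbert space and I the identity on H. Then the ∞-Fitzpatrick function φ⁽∞⁾_I := sup_{n≥1} φ⁽ⁿ⁾_I satisfies φ⁽∞⁾_I(x,y) = ½‖x‖² + ½‖y‖² for all x,y ∈ H. -/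
open scoped RealInnerProductSpace

private lemma step_ineq {H : Type*} [NormedAddCommGroup H] [InnerProductSpace ℝ H]
    (a b : H) : ⟪a - b, b⟫ ≤ ‖a‖^2/2 - ‖b‖^2/2 := by
  have h : (0:ℝ) ≤ ‖a - b‖^2 := sq_nonneg _
  have h2 := norm_sub_sq_real a b
  rw [inner_sub_left, real_inner_self_eq_norm_sq]
  nlinarith

private lemma inner_le_half {H : Type*} [NormedAddCommGroup H] [InnerProductSpace ℝ H]
    (a b : H) : ⟪a, b⟫ ≤ ‖a‖^2/2 + ‖b‖^2/2 := by
  have h : (0:ℝ) ≤ ‖a - b‖^2 := sq_nonneg _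
  have h2 := norm_sub_sq_real a b
  nlinarith

private lemma tele (g : ℕ → ℝ) : ∀ n, 1 ≤ n →
    ∑ i ∈ Finset.Icc 2 n, (g (i-1) - g i) = g 1 - g n := by
  intro n hn
  induction n, hn using Nat.le_induction with
  | base => simp
  | succ n hn ih =>
      rw [Finset.sum_Icc_succ_top (by omega), ih]
      simp

private lemma chain_val {H : Type*} [NormedAddCommGroup H] [InnerProductSpace ℝ H]
    (x y d : H) : ∀ n : ℕ, 1 ≤ n →
    ⟪x - (x + ((1:ℕ):ℝ) • d), x + ((1:ℕ):ℝ) • d⟫ +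
      (∑ i ∈ Finset.Icc 2 n, ⟪(x + (((i-1:ℕ)):ℝ) • d) - (x + (i:ℝ) • d), x + (i:ℝ) • d⟫) +
      ⟪x + (n:ℝ) • d, y⟫ =
    ⟪x, y⟫ + (n:ℝ) * ⟪d, y - x⟫ - ((n:ℝ) * ((n:ℝ)+1) / 2) * ‖d‖^2 := by
  intro n hn
  induction n, hn using Nat.le_induction with
  | base =>
      rw [show Finset.Icc 2 1 = ∅ by rfl]
      simp only [Finset.sum_empty, add_zero, Nat.cast_one, one_smul]
      simp only [inner_sub_left, inner_add_left, inner_add_right, inner_sub_right,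
        inner_smul_left, inner_smul_right, real_inner_self_eq_norm_sq, RCLike.ofReal_real_eq_id,
        id, conj_trivial, real_inner_comm x d, real_inner_comm y d]
      ring_nf
  | succ n hn ih =>
      rw [Finset.sum_Icc_succ_top (by omega : 2 ≤ n + 1), show n+1-1 = n from rfl]
      push_cast at ih ⊢
      simp only [inner_sub_left, inner_add_left, inner_add_right, inner_sub_right,
        inner_smul_left, inner_smul_right, real_inner_self_eq_norm_sq, RCLike.ofReal_real_eq_id,
        id, conj_trivial, real_inner_comm x d, real_inner_comm y d] at ih ⊢
      linear_combination ih

/-- The `∞`-Fitzpatrick function of the identity on a real Hilbert space: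
`φ⁽∞⁾_I(x,y) = ½‖x‖² + ½‖y‖²`. -/
theorem fitzpatrick_infty_identity {H : Type*} [NormedAddCommGroup H]
    [InnerProductSpace ℝ H] [CompleteSpace H] (x y : H) :
    IsLUB {r : ℝ | ∃ n : ℕ, 1 ≤ n ∧ ∃ c : ℕ → H,
        r = ⟪x - c 1, c 1⟫ + (∑ i ∈ Finset.Icc 2 n, ⟪c (i - 1) - c i, c i⟫) + ⟪c n, y⟫}
      (‖x‖ ^ 2 / 2 + ‖y‖ ^ 2 / 2) := by
  constructor
  · rintro r ⟨n, hn, c, rfl⟩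
    have h1 : ⟪x - c 1, c 1⟫ ≤ ‖x‖^2/2 - ‖c 1‖^2/2 := step_ineq x (c 1)
    have h2 : ∑ i ∈ Finset.Icc 2 n, ⟪c (i - 1) - c i, c i⟫ ≤
        ∑ i ∈ Finset.Icc 2 n, (‖c (i-1)‖^2/2 - ‖c i‖^2/2) :=
      Finset.sum_le_sum fun i _ => step_ineq (c (i-1)) (c i)
    rw [tele (fun i => ‖c i‖^2/2) n hn] at h2
    have h3 : ⟪c n, y⟫ ≤ ‖c n‖^2/2 + ‖y‖^2/2 := inner_le_half (c n) y
    linarith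
  · intro b hb
    have key : ∀ n : ℕ, 1 ≤ n →
        ⟪x, y⟫ + ((n:ℝ)/(2*((n:ℝ)+1))) * ‖y - x‖^2 ≤ b := by
      intro n hn
      set d : H := (((n:ℝ)+1))⁻¹ • (y - x) with hd
      have hmem : ⟪x, y⟫ + ((n:ℝ)/(2*((n:ℝ)+1))) * ‖y - x‖^2 ∈
          {r : ℝ | ∃ m : ℕ, 1 ≤ m ∧ ∃ c : ℕ → H,
            r = ⟪x - c 1, c 1⟫ + (∑ i ∈ Finset.Icc 2 m, ⟪c (i - 1) - c i, c i⟫) + ⟪c m, y⟫} := by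
        refine ⟨n, hn, fun i => x + (i:ℝ) • d, ?_⟩
        rw [chain_val x y d n hn]
        have hpos : ((n:ℝ)+1) ≠ 0 := by positivity
        have e1 : ⟪d, y - x⟫ = ((n:ℝ)+1)⁻¹ * ‖y - x‖^2 := by
          rw [hd, real_inner_smul_left, real_inner_self_eq_norm_sq]
        have e2 : ‖d‖^2 = (((n:ℝ)+1)⁻¹)^2 * ‖y - x‖^2 := by
          rw [hd, norm_smul]
          simp [mul_pow]
        rw [e1, e2]
        field_simp
        ring
      exact hb hmem
    refine le_of_forall_pos_le_add fun ε hε => ?_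
    obtain ⟨n, hgt⟩ := exists_nat_gt (‖y - x‖^2 / (2*ε))
    have hn1 : 1 ≤ n + 1 := Nat.le_add_left 1 n
    have hk := key (n+1) hn1
    have hnn : (0:ℝ) < (n:ℝ) + 1 + 1 := by positivity
    have hrem : ‖y - x‖^2 / (2*(((n:ℝ)+1)+1)) < ε := by
      rw [div_lt_iff₀ (by positivity)]
      have : ‖y - x‖^2 / (2*ε) < (n:ℝ) + 1 + 1 := lt_of_lt_of_le hgt (by linarith)
      rw [div_lt_iff₀ (by positivity)] at this
      linarith
    have hid : ‖x‖^2/2 + ‖y‖^2/2 =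
        (⟪x, y⟫ + (((n+1:ℕ):ℝ)/(2*(((n+1:ℕ):ℝ)+1))) * ‖y - x‖^2)
          + ‖y - x‖^2 / (2*(((n:ℝ)+1)+1)) := by
      push_cast
      have hns := norm_sub_sq_real y x
      rw [real_inner_comm x y] at hns
      field_simp
      nlinarith [hns]
    push_cast at hk hid
    linarith
end

section
/- Let R_θ be the counterclockwise rotation of ℝ² by angle θ ∈ [-π, π]. For an integer n ≥ 2, R_θ is n-monotone (i.e., for all x₁,…,xₙ ∈ ℝ² with xₙ₊₁ = x₁, ∑ᵢ₌₁ⁿ ⟨xᵢ - xᵢ₊₁, R_θ(xᵢ)⟩ ≥ 0) if and only if θ ∈ [-π/n, π/n]. -/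
/-!
Identify `ℝ²` with `ℂ`, so that `R_θ` is multiplication by `e^{iθ}` and the cyclic sum is
`Re (e^{-iθ} ∑ⱼ (zⱼ - zⱼ₊₁) z̄ⱼ)`. The cyclic shift is diagonalised by the discrete Fourier
transform on `ZMod n`: with `ẑ = 𝓕 z`, Parseval's identity and its shifted version give
`n · Re (e^{-iθ} ∑ⱼ (zⱼ - zⱼ₊₁) z̄ⱼ) = ∑ₖ (cos θ - cos (θ - 2πk/n)) |ẑₖ|²`.
Hence `R_θ` is `n`-monotone as soon as `cos (θ - 2πk/n) ≤ cos θ` for all `k`, which holds for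
`|θ| ≤ π/n`. Conversely, the vertices of a regular `n`-gon traversed in either direction make
every summand equal to `cos θ - cos (θ ∓ 2π/n)`, which forces `|θ| ≤ π/n`.
-/

/-- Counterclockwise rotation of `ℝ²` by angle `θ`. -/
noncomputable def rot (θ : ℝ) (x : ℝ × ℝ) : ℝ × ℝ :=
  (x.1 * Real.cos θ - x.2 * Real.sin θ, x.1 * Real.sin θ + x.2 * Real.cos θ)

/-- The Euclidean inner product on `ℝ²`. -/
def dot (a b : ℝ × ℝ) : ℝ := a.1 * b.1 + a.2 * b.2

open Finset

def IsNMonotone (n : ℕ) (T : ℝ × ℝ → ℝ × ℝ) : Prop :=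
  ∀ p : ℕ → ℝ × ℝ, p (n + 1) = p 1 → 0 ≤ ∑ i ∈ Icc 1 n, dot (p i - p (i + 1)) (T (p i))

section Trigonometry

open Real

theorem Real.cos_sub_cos_sub (θ φ : ℝ) :
    cos θ - cos (θ - φ) = 2 * sin (φ / 2) * sin (φ / 2 - θ) := by
  rw [cos_sub_cos, show (θ + (θ - φ)) / 2 = -(φ / 2 - θ) by ring, sin_neg,
    show (θ - (θ - φ)) / 2 = φ / 2 by ring]
  ring

theorem cos_sub_two_pi_mul_div_le {n k : ℕ} {θ : ℝ} (hθ : θ ∈ Set.Icc (-(π / n)) (π / n))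
    (hk : k < n) : cos (θ - 2 * π * k / n) ≤ cos θ := by
  obtain rfl | hk0 := Nat.eq_zero_or_pos k
  · simp
  have hn : (0 : ℝ) < n := by exact_mod_cast hk0.trans hk
  have hk1 : (1 : ℝ) ≤ k := by exact_mod_cast hk0
  have hkn : (k : ℝ) + 1 ≤ n := by exact_mod_cast hk
  have hπn : π / n * n = π := div_mul_cancel₀ _ hn.ne'
  have hπn0 : 0 < π / n := by positivity
  rw [← sub_nonneg, cos_sub_cos_sub, show 2 * π * k / n / 2 = k * (π / n) by ring]
  refine mul_nonneg (mul_nonneg zero_le_two (sin_nonneg_of_nonneg_of_le_pi ?_ ?_))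
    (sin_nonneg_of_nonneg_of_le_pi ?_ ?_) <;> nlinarith [hθ.1, hθ.2]

theorem le_pi_div_of_cos_sub_le {n : ℕ} (hn : 2 ≤ n) {θ : ℝ} (hθ : θ ≤ π)
    (h : cos (θ - 2 * π / n) ≤ cos θ) : θ ≤ π / n := by
  have hn' : (2 : ℝ) ≤ n := by exact_mod_cast hn
  have hπn : 0 < π / n := by positivity
  have hsin : 0 < sin (π / n) := sin_pos_of_pos_of_lt_pi hπn (div_lt_self pi_pos (by linarith))
  rw [← sub_nonneg, cos_sub_cos_sub, show 2 * π / n / 2 = π / n by ring] at h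
  by_contra! hlt
  have := sin_neg_of_neg_of_neg_pi_lt (x := π / n - θ) (by linarith) (by linarith)
  nlinarith

end Trigonometry

section RegularPolygon

open Real

theorem dot_sub_rot_cos_sin (θ α φ : ℝ) :
    dot ((cos α, sin α) - (cos (α + φ), sin (α + φ))) (rot θ (cos α, sin α)) =
      cos θ - cos (θ - φ) := by
  simp only [dot, rot, Prod.fst_sub, Prod.snd_sub, cos_add, sin_add, cos_sub]
  linear_combination (cos θ - cos θ * cos φ - sin θ * sin φ) * sin_sq_add_cos_sq α

theorem IsNMonotone.cos_sub_le {n : ℕ} (hn : n ≠ 0) {θ : ℝ} (h : IsNMonotone n (rot θ))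
    (k : ℤ) : cos (θ - 2 * π * k / n) ≤ cos θ := by
  set φ := 2 * π * k / n
  have hcyc : (cos ((n + 1 : ℕ) * φ), sin ((n + 1 : ℕ) * φ)) =
      (cos ((1 : ℕ) * φ), sin ((1 : ℕ) * φ)) := by
    have : ((n + 1 : ℕ) : ℝ) * φ = (1 : ℕ) * φ + k * (2 * π) := by
      simp only [φ]
      push_cast
      field_simp
      ring
    rw [this, cos_add_int_mul_two_pi, sin_add_int_mul_two_pi]
  have hsum := h (fun j ↦ (cos (j * φ), sin (j * φ))) hcyc
  simp only [Nat.cast_succ, add_one_mul, dot_sub_rot_cos_sin, sum_const, Nat.card_Icc,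
    Nat.add_sub_cancel, nsmul_eq_mul] at hsum
  exact sub_nonneg.mp (nonneg_of_mul_nonneg_right hsum (by positivity))

end RegularPolygon

section DiscreteFourier

open Complex ZMod
open scoped ComplexConjugate

theorem sum_Icc_eq_sum_zmod {α M : Type*} [AddCommMonoid M] {N : ℕ} [NeZero N] {p : ℕ → α}
    (hp : p (N + 1) = p 1) (F : α → α → M) :
    ∑ i ∈ Icc 1 N, F (p i) (p (i + 1)) =
      ∑ j : ZMod N, F (p (j.val + 1)) (p ((j + 1).val + 1)) := by
  have hval : ∀ i ≤ N, p ((i : ZMod N).val + 1) = p (i + 1) := by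
    intro i hi
    rcases hi.lt_or_eq with hi | rfl
    · rw [val_cast_of_lt hi]
    · rw [natCast_self, val_zero, hp]
  refine sum_nbij' (fun i ↦ ((i - 1 : ℕ) : ZMod N)) (fun j ↦ j.val + 1) (by simp) ?_ ?_
    (by simp) ?_
  · intro j _
    simpa using val_lt j
  · intro i hi
    rw [mem_Icc] at hi
    simp only [val_cast_of_lt (show i - 1 < N by omega)]
    omega
  · intro i hi
    rw [mem_Icc] at hi
    obtain ⟨m, rfl⟩ : ∃ m, i = m + 1 := ⟨i - 1, by omega⟩
    simp only [Nat.add_sub_cancel, ← Nat.cast_succ, hval m (by omega), hval (m + 1) hi.2]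

theorem dot_sub_rot_eq_re (θ : ℝ) (x y : ℝ × ℝ) :
    dot (x - y) (rot θ x) = (exp (↑(-θ) * I) *
      ((equivRealProd.symm x - equivRealProd.symm y) * conj (equivRealProd.symm x))).re := by
  simp only [dot, rot, equivRealProd_symm_apply, mul_re, mul_im, exp_ofReal_mul_I_re,
    exp_ofReal_mul_I_im, Real.cos_neg, Real.sin_neg, sub_re, sub_im, add_re, add_im, ofReal_re,
    ofReal_im, conj_re, conj_im, I_re, I_im, Prod.fst_sub, Prod.snd_sub]
  ring

variable {N : ℕ} [NeZero N]

theorem sum_stdAddChar_mul_normSq_dft (q : ZMod N → ℂ) (a : ZMod N) :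
    ∑ k, stdAddChar (a * k) * (normSq (𝓕 q k) : ℂ) = N * ∑ l, q (l + a) * conj (q l) := by
  calc ∑ k, stdAddChar (a * k) * (normSq (𝓕 q k) : ℂ)
      = ∑ k, ∑ j, ∑ l, q j * conj (q l) * stdAddChar (k * (a + l - j)) := by
        refine sum_congr rfl fun k _ ↦ ?_
        rw [← mul_conj, dft_apply, map_sum, sum_mul_sum, mul_sum]
        refine sum_congr rfl fun j _ ↦ ?_
        rw [mul_sum]
        refine sum_congr rfl fun l _ ↦ ?_
        rw [smul_eq_mul, smul_eq_mul, map_mul (starRingEnd ℂ), ← AddChar.map_neg_eq_conj,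
          show k * (a + l - j) = a * k + (-(j * k) + -(-(l * k))) by ring,
          AddChar.map_add_eq_mul, AddChar.map_add_eq_mul]
        ring
    _ = ∑ l, ∑ j, q j * conj (q l) * ∑ k, stdAddChar (k * (a + l - j)) := by
        simp_rw [mul_sum]
        exact (sum_comm.trans (sum_congr rfl fun _ _ ↦ sum_comm)).trans sum_comm
    _ = N * ∑ l, q (l + a) * conj (q l) := by
        have hψ := fun b ↦ AddChar.sum_mulShift (ψ := stdAddChar) b (isPrimitive_stdAddChar N)
        simp_rw [hψ, sub_eq_zero, add_comm a, Nat.cast_ite, Nat.cast_zero, mul_ite, mul_zero,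
          sum_ite_eq, mem_univ, if_true, ZMod.card, mul_sum]
        refine sum_congr rfl fun l _ ↦ ?_
        ring

theorem natCast_mul_sum_sub_shift_mul_conj (q : ZMod N → ℂ) :
    N * ∑ j, (q j - q (j + 1)) * conj (q j) =
      ∑ k, (1 - stdAddChar k) * (normSq (𝓕 q k) : ℂ) := by
  have h0 := sum_stdAddChar_mul_normSq_dft q 0
  have h1 := sum_stdAddChar_mul_normSq_dft q 1
  simp only [zero_mul, AddChar.map_zero_eq_one, one_mul, add_zero] at h0 h1
  simp_rw [sub_mul, sum_sub_distrib, mul_sub, ← h0, ← h1, one_mul]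

theorem stdAddChar_eq_exp (k : ZMod N) :
    stdAddChar k = exp (↑(2 * Real.pi * k.val / N) * I) := by
  rw [stdAddChar_apply, toCircle_apply]
  push_cast
  ring_nf

theorem re_exp_mul_one_sub_stdAddChar (θ : ℝ) (k : ZMod N) :
    (exp (↑(-θ) * I) * (1 - stdAddChar k)).re =
      Real.cos θ - Real.cos (θ - 2 * Real.pi * k.val / N) := by
  rw [stdAddChar_eq_exp, mul_sub, mul_one, ← exp_add, ← add_mul, ← ofReal_add, sub_re,
    exp_ofReal_mul_I_re, exp_ofReal_mul_I_re, Real.cos_neg, ← Real.cos_neg (θ - _), neg_sub,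
    neg_add_eq_sub]

theorem re_exp_mul_sum_sub_shift_mul_conj_nonneg {θ : ℝ}
    (h : ∀ k < N, Real.cos (θ - 2 * Real.pi * k / N) ≤ Real.cos θ) (q : ZMod N → ℂ) :
    0 ≤ (exp (↑(-θ) * I) * ∑ j, (q j - q (j + 1)) * conj (q j)).re := by
  have hspectral : (N : ℝ) * (exp (↑(-θ) * I) * ∑ j, (q j - q (j + 1)) * conj (q j)).re =
      ∑ k, (Real.cos θ - Real.cos (θ - 2 * Real.pi * k.val / N)) * normSq (𝓕 q k) := by
    rw [← re_ofReal_mul, ofReal_natCast, mul_left_comm, natCast_mul_sum_sub_shift_mul_conj,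
      mul_sum, re_sum]
    refine sum_congr rfl fun k _ ↦ ?_
    rw [← mul_assoc, re_mul_ofReal, re_exp_mul_one_sub_stdAddChar]
  have hnonneg : 0 ≤ (N : ℝ) * (exp (↑(-θ) * I) * ∑ j, (q j - q (j + 1)) * conj (q j)).re :=
    hspectral ▸ sum_nonneg fun k _ ↦ mul_nonneg (sub_nonneg.2 (h _ (val_lt k))) (normSq_nonneg _)
  exact nonneg_of_mul_nonneg_right hnonneg (mod_cast NeZero.pos N)

theorem isNMonotone_rot_of_forall_cos_sub_le {θ : ℝ}
    (h : ∀ k < N, Real.cos (θ - 2 * Real.pi * k / N) ≤ Real.cos θ) : IsNMonotone N (rot θ) := by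
  intro p hp
  have hreindex := sum_Icc_eq_sum_zmod hp fun x y ↦ dot (x - y) (rot θ x)
  simp_rw [hreindex, dot_sub_rot_eq_re, ← re_sum, ← mul_sum]
  exact re_exp_mul_sum_sub_shift_mul_conj_nonneg h fun j ↦ equivRealProd.symm (p (j.val + 1))

end DiscreteFourier

/-- For `n ≥ 2`, the rotation `R_θ` (with `θ ∈ [-π, π]`) is `n`-monotone
iff `θ ∈ [-π/n, π/n]`. -/
theorem rotation_nMonotone_iff (θ : ℝ) (hθ : θ ∈ Set.Icc (-Real.pi) Real.pi)
    (n : ℕ) (hn : 2 ≤ n) :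
    (∀ p : ℕ → ℝ × ℝ, p (n + 1) = p 1 →
        0 ≤ ∑ i ∈ Finset.Icc 1 n, dot (p i - p (i + 1)) (rot θ (p i)))
      ↔ θ ∈ Set.Icc (-(Real.pi / n)) (Real.pi / n) := by
  have hn0 : n ≠ 0 := by omega
  have : NeZero n := ⟨hn0⟩
  change IsNMonotone n (rot θ) ↔ _
  refine ⟨fun h ↦ ⟨?_, ?_⟩, fun h ↦ isNMonotone_rot_of_forall_cos_sub_le
    fun k hk ↦ cos_sub_two_pi_mul_div_le h hk⟩
  · refine neg_le.mp (le_pi_div_of_cos_sub_le hn (by linarith [hθ.1]) ?_)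
    have hback := h.cos_sub_le hn0 (-1)
    rwa [show θ - 2 * Real.pi * ((-1 : ℤ) : ℝ) / n = -(-θ - 2 * Real.pi / n) by push_cast; ring,
      Real.cos_neg, ← Real.cos_neg θ] at hback
  · exact le_pi_div_of_cos_sub_le hn hθ.2 (by simpa using h.cos_sub_le hn0 1)
end

section
/- Let (X, Y, ⟨·,·⟩) be a dual pairing of real vector spaces and Z = X × Y with pairing z·w = ⟨x,v⟩ + ⟨u,y⟩ for z=(x,y), w=(u,v), and c(z) = ⟨x,y⟩. If f : Z → ℝ ∪ {+∞} is convex, f ≥ c, and f(z) = c(z) at some z, then the conjugate f^□(w) := sup_{z'} (z'·w - f(z')) also satisfies f^□(z) = c(z). -/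
private lemma aux_le (A K r : ℝ) (h : ∀ t : ℝ, 0 < t → t ≤ 1 → A + t * K ≤ r) :
    A ≤ r := by
  by_contra hc
  push_neg at hc
  have hε : 0 < A - r := by linarith
  have hK : 0 < |K| + 1 := by positivity
  set t := min 1 ((A - r) / (2 * (|K| + 1))) with ht
  have ht0 : 0 < t := lt_min one_pos (by positivity)
  have ht1 : t ≤ 1 := min_le_left _ _
  have h2 := h t ht0 ht1
  have ht2 : t ≤ (A - r) / (2 * (|K| + 1)) := min_le_right _ _
  have h3 : t * (|K| + 1) ≤ (A - r) / 2 := by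
    rw [le_div_iff₀ (show (0:ℝ) < 2 * (|K| + 1) by positivity)] at ht2
    nlinarith
  have h4 : -(t * (|K| + 1)) ≤ t * K := by nlinarith [neg_abs_le K, ht0.le]
  nlinarith

/-- If `f : X × Y → ℝ ∪ {+∞}` is convex, `f ≥ c` (where `c(x,y) = ⟨x,y⟩`), and
`f(z) = c(z)` at some point `z`, then the conjugate `f^□` with respect to the
symmetric pairing `z·w = ⟨x,v⟩ + ⟨u,y⟩` also satisfies `f^□(z) = c(z)`. -/
theorem conj_eq_coupling_of_eq_coupling {X Y : Type*}
    [AddCommGroup X] [Module ℝ X] [AddCommGroup Y] [Module ℝ Y]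
    (b : X →ₗ[ℝ] Y →ₗ[ℝ] ℝ) (f : X × Y → EReal)
    (hconv : ∀ z w : X × Y, ∀ a t : ℝ, 0 ≤ a → 0 ≤ t → a + t = 1 →
        f (a • z + t • w) ≤ (a : EReal) * f z + (t : EReal) * f w)
    (hge : ∀ z : X × Y, ((b z.1 z.2 : ℝ) : EReal) ≤ f z)
    (z : X × Y) (hz : f z = ((b z.1 z.2 : ℝ) : EReal)) :
    (⨆ w : X × Y, (((b w.1 z.2 + b z.1 w.2 : ℝ) : EReal) - f w))
      = ((b z.1 z.2 : ℝ) : EReal) := by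
  apply le_antisymm
  · apply iSup_le
    intro w
    by_cases htop : f w = ⊤
    · simp [htop]
    · have hbot : f w ≠ ⊥ := fun h => by
        have := hge w; rw [h] at this; exact (EReal.coe_ne_bot _) (le_bot_iff.mp this)
      obtain ⟨r, hr⟩ : ∃ r : ℝ, f w = (r : EReal) := by
        lift f w to ℝ using ⟨htop, hbot⟩ with r hr
        exact ⟨r, rfl⟩
      rw [hr, ← EReal.coe_sub, EReal.coe_le_coe_iff]
      have hr' : b w.1 w.2 ≤ r := by
        have := hge w; rw [hr, EReal.coe_le_coe_iff] at this; exact this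
      have key : b w.1 z.2 + b z.1 w.2 - b z.1 z.2 ≤ r := by
        apply aux_le _ (b z.1 z.2 - (b w.1 z.2 + b z.1 w.2) + b w.1 w.2)
        intro t ht0 ht1
        have h1 := hconv z w (1 - t) t (by linarith) ht0.le (by ring)
        have h2 := hge ((1 - t) • z + t • w)
        rw [hz, hr] at h1
        have hmid : ((1 - t) • z + t • w).1 = (1 - t) • z.1 + t • w.1 := rfl
        have hmid2 : ((1 - t) • z + t • w).2 = (1 - t) • z.2 + t • w.2 := rfl
        rw [hmid, hmid2] at h2
        simp only [map_add, map_smul, LinearMap.add_apply, LinearMap.smul_apply,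
          smul_eq_mul] at h2
        have h3 := le_trans h2 h1
        rw [show (((1 - t : ℝ)) : EReal) * ((b z.1 z.2 : ℝ) : EReal) + (t : EReal) * ((r : ℝ) : EReal)
            = (((1 - t) * b z.1 z.2 + t * r : ℝ) : EReal) by push_cast; ring] at h3
        rw [EReal.coe_le_coe_iff] at h3
        nlinarith
      linarith
  · have h := le_iSup (fun w : X × Y => (((b w.1 z.2 + b z.1 w.2 : ℝ) : EReal) - f w)) z
    refine le_trans ?_ h
    rw [hz, ← EReal.coe_sub]
    norm_num
end

section
/- Let (X, Y, ⟨·,·⟩) be a dual pairing. A relation T ⊆ X × Y is (n+1)-monotone if and only if its n-th Fitzpatrick function satisfies φ⁽ⁿ⁾_T(x,y) ≤ ⟨x,y⟩ for every (x,y) ∈ T. -/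
variable {X Y : Type*} [AddCommGroup X] [Module ℝ X] [AddCommGroup Y] [Module ℝ Y]

/-- The `n`-th Fitzpatrick function of a relation `T ⊆ X × Y` with respect to a
pairing `b`: `φ⁽ⁿ⁾_T(x,y) = sup{⟨x-x₁,y₁⟩ + ∑ᵢ₌₂ⁿ⟨xᵢ₋₁-xᵢ,yᵢ⟩ + ⟨xₙ,y⟩}`. -/
noncomputable def fitz (b : X →ₗ[ℝ] Y →ₗ[ℝ] ℝ) (T : Set (X × Y)) (n : ℕ)
    (x : X) (y : Y) : EReal :=
  sSup {r : EReal | ∃ c : ℕ → X × Y, (∀ i ∈ Finset.Icc 1 n, c i ∈ T) ∧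
    r = ((b (x - (c 1).1) (c 1).2
        + ∑ i ∈ Finset.Icc 2 n, b ((c (i - 1)).1 - (c i).1) (c i).2
        + b (c n).1 y : ℝ) : EReal)}

/-- `T` is `m`-monotone. -/
def NMono (b : X →ₗ[ℝ] Y →ₗ[ℝ] ℝ) (T : Set (X × Y)) (m : ℕ) : Prop :=
  ∀ p : ℕ → X × Y, (∀ i ∈ Finset.Icc 1 m, p i ∈ T) → p (m + 1) = p 1 →
    0 ≤ ∑ i ∈ Finset.Icc 1 m, b ((p i).1 - (p (i + 1)).1) (p i).2

/-- Key algebraic identity: the cyclic-monotonicity sum for the reversed cycle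
equals `⟨x,y⟩` minus the Fitzpatrick integrand. -/
lemma fitz_key (b : X →ₗ[ℝ] Y →ₗ[ℝ] ℝ) (c p : ℕ → X × Y) (x : X) (y : Y)
    (n : ℕ) (hn : 1 ≤ n)
    (hp1 : ∀ j ∈ Finset.Icc 1 n, p j = c (n + 1 - j))
    (hpn1 : p (n + 1) = (x, y)) (hpn2 : p (n + 2) = c n) :
    ∑ i ∈ Finset.Icc 1 (n + 1), b ((p i).1 - (p (i + 1)).1) (p i).2
      = b x y - (b (x - (c 1).1) (c 1).2
          + ∑ i ∈ Finset.Icc 2 n, b ((c (i - 1)).1 - (c i).1) (c i).2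
          + b (c n).1 y) := by
  obtain ⟨m, rfl⟩ : ∃ m, n = m + 1 := ⟨n - 1, by omega⟩
  have e1 : m + 1 + 1 = m + 2 := by omega
  have e2 : m + 1 + 2 = m + 3 := by omega
  rw [e1, e2] at *
  have hpm1 : p (m + 1) = c 1 := by
    have h := hp1 (m + 1) (by simp)
    rwa [show m + 1 + 1 - (m + 1) = 1 by omega] at h
  have h1 : ∑ i ∈ Finset.Icc 1 (m + 2), b ((p i).1 - (p (i + 1)).1) (p i).2
      = ∑ i ∈ Finset.Icc 1 m, b ((p i).1 - (p (i + 1)).1) (p i).2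
        + b ((p (m + 1)).1 - (p (m + 2)).1) (p (m + 1)).2
        + b ((p (m + 2)).1 - (p (m + 3)).1) (p (m + 2)).2 := by
    rw [show m + 2 = (m + 1) + 1 by omega,
      Finset.sum_Icc_succ_top (by omega), Finset.sum_Icc_succ_top (by omega)]
  have h2 : ∑ i ∈ Finset.Icc 2 (m + 1), b ((c (i - 1)).1 - (c i).1) (c i).2
      = ∑ j ∈ Finset.Icc 1 m, b ((p (j + 1)).1 - (p j).1) (p j).2 := by
    refine Finset.sum_nbij' (fun i => m + 2 - i) (fun j => m + 2 - j)
      (fun a ha => by simp only [Finset.mem_Icc] at *; omega)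
      (fun a ha => by simp only [Finset.mem_Icc] at *; omega)
      (fun a ha => by simp only [Finset.mem_Icc] at ha; show m + 2 - (m + 2 - a) = a; omega)
      (fun a ha => by simp only [Finset.mem_Icc] at ha; show m + 2 - (m + 2 - a) = a; omega)
      (fun a ha => ?_)
    simp only [Finset.mem_Icc] at ha
    · have hca : c a = p (m + 2 - a) := by
        have h := hp1 (m + 2 - a) (by simp only [Finset.mem_Icc]; omega)
        rw [show m + 1 + 1 - (m + 2 - a) = a by omega] at h
        exact h.symm
      have hca' : c (a - 1) = p (m + 2 - a + 1) := by
        have h := hp1 (m + 2 - a + 1) (by simp only [Finset.mem_Icc]; omega)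
        rw [show m + 1 + 1 - (m + 2 - a + 1) = a - 1 by omega] at h
        exact h.symm
      rw [hca, hca']
  rw [h1, h2, hpn1, hpn2, hpm1]
  simp only [map_sub, LinearMap.sub_apply, Finset.sum_sub_distrib]
  ring

/-- `T` is `(n+1)`-monotone iff `φ⁽ⁿ⁾_T ≤ c` on `T`. -/
theorem nMono_succ_iff_fitz_le (b : X →ₗ[ℝ] Y →ₗ[ℝ] ℝ) (T : Set (X × Y))
    (n : ℕ) (hn : 1 ≤ n) :
    NMono b T (n + 1) ↔ ∀ z ∈ T, fitz b T n z.1 z.2 ≤ ((b z.1 z.2 : ℝ) : EReal) := by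
  constructor
  · intro hmono z hz
    refine sSup_le ?_
    rintro r ⟨c, hc, rfl⟩
    rw [EReal.coe_le_coe_iff]
    set p : ℕ → X × Y := fun j =>
      if j = n + 1 then z else if j = n + 2 then c n else c (n + 1 - j) with hp
    have hp1 : ∀ j ∈ Finset.Icc 1 n, p j = c (n + 1 - j) := by
      intro j hj
      simp only [Finset.mem_Icc] at hj
      simp only [hp, if_neg (by omega : ¬ j = n + 1), if_neg (by omega : ¬ j = n + 2)]
    have hpn1 : p (n + 1) = (z.1, z.2) := by simp [hp]
    have hpn2 : p (n + 2) = c n := by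
      simp only [hp]
      rw [if_neg (by omega : ¬ n + 2 = n + 1)]
      simp
    have hmem : ∀ i ∈ Finset.Icc 1 (n + 1), p i ∈ T := by
      intro i hi
      simp only [Finset.mem_Icc] at hi
      rcases eq_or_ne i (n + 1) with h | h
      · simpa [hp, h] using hz
      · rw [hp1 i (Finset.mem_Icc.mpr (by omega))]
        exact hc _ (Finset.mem_Icc.mpr (by omega))
    have hcyc : p (n + 1 + 1) = p 1 := by
      rw [show n + 1 + 1 = n + 2 by omega, hpn2,
        hp1 1 (Finset.mem_Icc.mpr (by omega)),
        show n + 1 - 1 = n by omega]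
    have h0 := hmono p hmem hcyc
    rw [fitz_key b c p z.1 z.2 n hn hp1 hpn1 hpn2] at h0
    linarith
  · intro hle p hmem hcyc
    have hz : p (n + 1) ∈ T := hmem (n + 1) (Finset.mem_Icc.mpr (by omega))
    set c : ℕ → X × Y := fun i => p (n + 1 - i) with hcdef
    have hp1 : ∀ j ∈ Finset.Icc 1 n, p j = c (n + 1 - j) := by
      intro j hj
      simp only [Finset.mem_Icc] at hj
      simp only [hcdef]
      rw [show n + 1 - (n + 1 - j) = j by omega]
    have hcn : c n = p 1 := by
      simp only [hcdef]; rw [show n + 1 - n = 1 by omega]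
    have hpn2 : p (n + 2) = c n := by
      rw [hcn, ← hcyc]
    have hcmem : ∀ i ∈ Finset.Icc 1 n, c i ∈ T := by
      intro i hi
      simp only [Finset.mem_Icc] at hi
      exact hmem _ (Finset.mem_Icc.mpr (by omega))
    have hr : ((b ((p (n+1)).1 - (c 1).1) (c 1).2
        + ∑ i ∈ Finset.Icc 2 n, b ((c (i - 1)).1 - (c i).1) (c i).2
        + b (c n).1 (p (n+1)).2 : ℝ) : EReal)
        ≤ ((b (p (n+1)).1 (p (n+1)).2 : ℝ) : EReal) := by
      have hfz := hle _ hz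
      unfold fitz at hfz
      refine le_trans (le_sSup ?_) hfz
      exact ⟨c, hcmem, rfl⟩
    rw [EReal.coe_le_coe_iff] at hr
    have hkey := fitz_key b c p (p (n+1)).1 (p (n+1)).2 n hn hp1 (by simp) hpn2
    rw [hkey]
    linarith
end
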